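/- arXiv:0904.3847 — 5 statements merged into one kernel-verified Lean document; each statement's English description precedes it below -/
import Mathlib

section
/- The normalizing constant of the standardized symmetric Beta density converges to that of the standard Gaussian: if a_n → ∞, then (8γn)^{-1/2} · 2^{-2a_n + 2} / B(a_n, a_n) → (2π)^{-1/2}, where a_n/n → γ > 0 and B is the Beta function. -/
open Filter Real Topology

/-!
Legendre's duplication formula turns `2^(2 - 2a) / B(a, a)` into `2 Γ(a + 1/2) / (√π Γ(a))`, so
the sequence equals `(2π)^(-1/2) · Γ(a + 1/2) / (Γ(a) √a) · √(a_n / (γ n))`. The last factor tends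
to `1` because `a_n / n → γ`. The Gamma ratio tends to `1` because log-convexity of `Γ`, applied
at the midpoints `x + 1/2` of `[x, x + 1]` and `x + 1` of `[x + 1/2, x + 3/2]`, squeezes its square
between `x / (x + 1/2)` and `1`.
-/

namespace Real

lemma Gamma_midpoint_sq_le {s t : ℝ} (hs : 0 < s) (ht : 0 < t) :
    Gamma ((s + t) / 2) ^ 2 ≤ Gamma s * Gamma t := by
  have h := Gamma_mul_add_mul_le_rpow_Gamma_mul_rpow_Gamma hs ht (a := 1 / 2) (b := 1 / 2)
    one_half_pos one_half_pos (add_halves 1)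
  rw [← mul_add, one_div_mul_eq_div] at h
  calc Gamma ((s + t) / 2) ^ 2 ≤ (Gamma s ^ (1 / 2 : ℝ) * Gamma t ^ (1 / 2 : ℝ)) ^ 2 :=
        pow_le_pow_left₀ (Gamma_pos_of_pos (by positivity)).le h 2
    _ = Gamma s * Gamma t := by
        rw [← sqrt_eq_rpow, ← sqrt_eq_rpow, mul_pow, sq_sqrt (Gamma_pos_of_pos hs).le,
          sq_sqrt (Gamma_pos_of_pos ht).le]

lemma Gamma_add_half_sq_le {x : ℝ} (hx : 0 < x) : Gamma (x + 1 / 2) ^ 2 ≤ x * Gamma x ^ 2 := by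
  have h := Gamma_midpoint_sq_le hx (by linarith : 0 < x + 1)
  rwa [show (x + (x + 1)) / 2 = x + 1 / 2 by ring, Gamma_add_one hx.ne', mul_comm, mul_assoc,
    ← sq] at h

lemma sq_mul_Gamma_sq_le_Gamma_add_half_sq {x : ℝ} (hx : 0 < x) :
    x ^ 2 * Gamma x ^ 2 ≤ (x + 1 / 2) * Gamma (x + 1 / 2) ^ 2 := by
  have h := Gamma_midpoint_sq_le (by linarith : 0 < x + 1 / 2) (by linarith : 0 < x + 1 / 2 + 1)
  rwa [show (x + 1 / 2 + (x + 1 / 2 + 1)) / 2 = x + 1 by ring, Gamma_add_one hx.ne',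
    Gamma_add_one (by linarith), mul_pow, ← mul_assoc, mul_comm _ (x + 1 / 2), mul_assoc, ← sq] at h

lemma tendsto_Gamma_add_half_div_Gamma_mul_sqrt :
    Tendsto (fun x => Gamma (x + 1 / 2) / (Gamma x * √x)) atTop (𝓝 1) := by
  have hlower : Tendsto (fun x : ℝ => 1 - (2 * x + 1)⁻¹) atTop (𝓝 1) := by
    simpa using tendsto_const_nhds.sub (tendsto_inv_atTop_zero.comp
      (tendsto_atTop_add_const_right _ 1 (tendsto_id.const_mul_atTop (two_pos : (0 : ℝ) < 2))))
  have hsq : Tendsto (fun x => (Gamma (x + 1 / 2) / (Gamma x * √x)) ^ 2) atTop (𝓝 1) := by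
    refine tendsto_of_tendsto_of_tendsto_of_le_of_le' hlower tendsto_const_nhds ?_ ?_ <;>
      filter_upwards [eventually_gt_atTop 0] with x hx <;>
      have hG := Gamma_pos_of_pos hx <;>
      rw [div_pow, mul_pow, sq_sqrt hx.le]
    · rw [le_div_iff₀ (by positivity)]
      calc (1 - (2 * x + 1)⁻¹) * (Gamma x ^ 2 * x) = x ^ 2 * Gamma x ^ 2 / (x + 1 / 2) := by
            field_simp; ring
        _ ≤ Gamma (x + 1 / 2) ^ 2 := by
            rw [div_le_iff₀ (by positivity)]
            linarith [sq_mul_Gamma_sq_le_Gamma_add_half_sq hx]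
    · exact div_le_one_of_le₀ (by linarith [Gamma_add_half_sq_le hx]) (by positivity)
  have hsqrt := hsq.sqrt
  rw [sqrt_one] at hsqrt
  refine hsqrt.congr' ?_
  filter_upwards [eventually_gt_atTop 0] with x hx
  exact sqrt_sq (div_nonneg (Gamma_pos_of_pos (by linarith)).le (by positivity))

lemma rpow_neg_half_mul_two_rpow_div_beta_eq {x y : ℝ} (hx : 0 < x) (hy : 0 < y) :
    (8 * y) ^ (-(1 : ℝ) / 2) * (2 : ℝ) ^ (-2 * x + 2) / (Gamma x * Gamma x / Gamma (2 * x)) =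
      (2 * π) ^ (-(1 : ℝ) / 2) * (Gamma (x + 1 / 2) / (Gamma x * √x)) * √(x / y) := by
  have hGamma_add_half : Gamma (x + 1 / 2) = Gamma (2 * x) * 2 ^ (1 - 2 * x) * √π / Gamma x := by
    rw [← Gamma_mul_Gamma_add_half, mul_div_cancel_left₀ _ (Gamma_pos_of_pos hx).ne']
  have hpow : (2 : ℝ) ^ (-2 * x + 2) = 2 ^ (1 - 2 * x) * 2 := by
    rw [show -2 * x + 2 = 1 - 2 * x + 1 by ring, rpow_add two_pos, rpow_one]
  have h8 : √(8 * y) = 2 * (√2 * √y) := by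
    rw [show 8 * y = 2 ^ 2 * (2 * y) by ring, sqrt_mul (by positivity), sqrt_sq zero_le_two,
      sqrt_mul zero_le_two]
  have hG := Gamma_pos_of_pos hx
  have h2x := rpow_pos_of_pos two_pos (1 - 2 * x)
  simp only [show -(1 : ℝ) / 2 = -(1 / 2) by ring, rpow_neg (by positivity : (0 : ℝ) ≤ 8 * y),
    rpow_neg (by positivity : (0 : ℝ) ≤ 2 * π), ← sqrt_eq_rpow]
  rw [hGamma_add_half, hpow, h8, sqrt_mul zero_le_two, sqrt_div hx.le]
  field_simp

end Real

/-- The normalizing constant of the standardized symmetric Beta density converges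
to that of the standard Gaussian: `(8γn)^{-1/2} · 2^{-2a_n+2} / B(a_n,a_n) → (2π)^{-1/2}`,
where `B(a,b) = Γ(a)Γ(b)/Γ(a+b)`. -/
theorem beta_normalizing_constant_tendsto_gaussian (a : ℕ → ℝ) (γ : ℝ) (hγ : 0 < γ)
    (ha : Tendsto a atTop atTop)
    (hlim : Tendsto (fun n : ℕ => a n / n) atTop (nhds γ)) :
    Tendsto (fun n : ℕ =>
        (8 * γ * n) ^ (-(1:ℝ)/2) * (2:ℝ) ^ (-2 * a n + 2) /
          (Real.Gamma (a n) * Real.Gamma (a n) / Real.Gamma (2 * a n)))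
      atTop (nhds ((2 * Real.pi) ^ (-(1:ℝ)/2))) := by
  have hratio := tendsto_Gamma_add_half_div_Gamma_mul_sqrt.comp ha
  have hsqrt : Tendsto (fun n : ℕ => √(a n / (γ * n))) atTop (𝓝 1) := by
    have h := (hlim.div_const γ).sqrt
    rw [div_self hγ.ne', sqrt_one] at h
    refine h.congr fun n => ?_
    rw [div_div, mul_comm]
  have hlimit := (hratio.mul hsqrt).const_mul ((2 * π) ^ (-(1 : ℝ) / 2))
  rw [mul_one, mul_one] at hlimit
  refine hlimit.congr' ?_
  filter_upwards [eventually_gt_atTop 0, ha.eventually_gt_atTop 0] with n hn hx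
  rw [mul_assoc 8, rpow_neg_half_mul_two_rpow_div_beta_eq hx (by positivity), mul_assoc]
  rfl
end

section
/- With V_n = ∏_{k=1}^n B(k,k) the volume of the scalar n-th moment space, one has log V_n / (-n² log 2) → 1 as n → ∞. -/
/-!
`B(k,k) = 2 / (k · C(2k,k))`, and `4^k / (2k) ≤ C(2k,k) ≤ 4^k`, so
`log B(k,k) = -(2k - 1) log 2 + O(log k)`. The odd numbers `2k - 1` sum to `n²`, hence
`log V_n = -n² log 2 + O(n log n)`.
-/

open Filter Finset Real
open scoped Nat

theorem Nat.succ_mul_centralBinom_succ_mul_factorial_sq (m : ℕ) :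
    (m + 1) * Nat.centralBinom (m + 1) * m ! ^ 2 = 2 * (2 * m + 1)! := by
  have h := Nat.choose_mul_factorial_mul_factorial (show m + 1 ≤ 2 * (m + 1) by omega)
  rw [show 2 * (m + 1) - (m + 1) = m + 1 by omega, show 2 * (m + 1) = 2 * m + 1 + 1 by ring,
    Nat.factorial_succ (2 * m + 1), Nat.factorial_succ m] at h
  rw [Nat.centralBinom_eq_two_mul_choose, show 2 * (m + 1) = 2 * m + 1 + 1 by ring]
  apply Nat.eq_of_mul_eq_mul_left (show 0 < m + 1 by omega)
  linear_combination h

theorem Real.Gamma_mul_Gamma_div_Gamma_two_mul_natCast {k : ℕ} (hk : k ≠ 0) :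
    Gamma k * Gamma k / Gamma (2 * k) = 2 / (k * Nat.centralBinom k) := by
  obtain ⟨m, rfl⟩ := Nat.exists_eq_add_one_of_ne_zero hk
  have key : ((m + 1 : ℕ) : ℝ) * Nat.centralBinom (m + 1) * (m ! : ℝ) ^ 2 = 2 * (2 * m + 1)! := by
    exact_mod_cast Nat.succ_mul_centralBinom_succ_mul_factorial_sq m
  have hΓ : Gamma (2 * (m + 1 : ℕ)) = (2 * m + 1)! := by
    rw [show (2 * (m + 1 : ℕ) : ℝ) = (2 * m + 1 : ℕ) + 1 by push_cast; ring,
      Gamma_nat_eq_factorial]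
  rw [Nat.cast_succ, Gamma_nat_eq_factorial, ← Nat.cast_succ, hΓ]
  have : (0 : ℝ) < (2 * m + 1)! := by positivity
  have : (0 : ℝ) < Nat.centralBinom (m + 1) := by exact_mod_cast Nat.centralBinom_pos _
  field_simp
  linear_combination key

theorem Real.log_Gamma_mul_Gamma_div_Gamma_two_mul_natCast_le {k : ℕ} (hk : k ≠ 0) :
    log (Gamma k * Gamma k / Gamma (2 * k)) ≤ log 2 - (2 * k - 1) * log 2 := by
  have hpos : (0 : ℝ) < k * Nat.centralBinom k := by
    have := Nat.centralBinom_pos k; positivity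
  have h4 : (4 : ℝ) ^ k ≤ 2 * (k * Nat.centralBinom k) := by
    exact_mod_cast (mul_assoc 2 k _ ▸ Nat.four_pow_le_two_mul_self_mul_centralBinom k (by omega))
  rw [Gamma_mul_Gamma_div_Gamma_two_mul_natCast hk, log_div two_ne_zero hpos.ne']
  have := log_le_log (by positivity) h4
  rw [log_mul two_ne_zero hpos.ne', show (4 : ℝ) = 2 ^ 2 by norm_num, ← pow_mul, log_pow] at this
  push_cast at this
  linarith

theorem Real.le_log_Gamma_mul_Gamma_div_Gamma_two_mul_natCast {k : ℕ} (hk : k ≠ 0) :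
    -((2 * k - 1) * log 2) - log k ≤ log (Gamma k * Gamma k / Gamma (2 * k)) := by
  have hcb : (0 : ℝ) < Nat.centralBinom k := by exact_mod_cast Nat.centralBinom_pos k
  have hk' : (0 : ℝ) < k := by positivity
  have h4 : (Nat.centralBinom k : ℝ) ≤ 2 ^ (2 * k) := by
    rw [pow_mul]; exact_mod_cast Nat.centralBinom_le_four_pow k
  rw [Gamma_mul_Gamma_div_Gamma_two_mul_natCast hk, log_div two_ne_zero (by positivity),
    log_mul hk'.ne' hcb.ne']
  have := log_le_log hcb h4
  rw [log_pow] at this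
  push_cast at this
  linarith

theorem Finset.sum_Icc_two_mul_sub_one (n : ℕ) : ∑ k ∈ Icc 1 n, (2 * (k : ℝ) - 1) = n ^ 2 := by
  induction n with
  | zero => simp
  | succ n ih => rw [sum_Icc_succ_top (by omega), ih]; push_cast; ring

noncomputable def momentSpaceVolume (n : ℕ) : ℝ :=
  ∏ k ∈ Icc 1 n, Gamma k * Gamma k / Gamma (2 * k)

theorem log_momentSpaceVolume (n : ℕ) :
    log (momentSpaceVolume n) = ∑ k ∈ Icc 1 n, log (Gamma k * Gamma k / Gamma (2 * k)) := by
  refine log_prod fun k hk => ?_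
  have hk : k ≠ 0 := by simp only [mem_Icc] at hk; omega
  rw [Gamma_mul_Gamma_div_Gamma_two_mul_natCast hk]
  have := Nat.centralBinom_pos k
  positivity

theorem log_momentSpaceVolume_le (n : ℕ) :
    log (momentSpaceVolume n) ≤ n * log 2 - n ^ 2 * log 2 := by
  calc log (momentSpaceVolume n)
      ≤ ∑ k ∈ Icc 1 n, (log 2 - (2 * k - 1) * log 2) := by
        rw [log_momentSpaceVolume]
        gcongr with k hk
        exact log_Gamma_mul_Gamma_div_Gamma_two_mul_natCast_le (by simp only [mem_Icc] at hk; omega)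
    _ = n * log 2 - n ^ 2 * log 2 := by
        rw [sum_sub_distrib, ← sum_mul, sum_Icc_two_mul_sub_one]; simp

theorem le_log_momentSpaceVolume (n : ℕ) :
    -(n ^ 2 * log 2) - n * log n ≤ log (momentSpaceVolume n) := by
  have hlog : ∑ k ∈ Icc 1 n, log (k : ℝ) ≤ n * log n := by
    simpa using sum_le_card_nsmul (Icc 1 n) (fun k : ℕ => log (k : ℝ)) (log n) fun k hk => by
      simp only [mem_Icc] at hk
      exact log_le_log (by exact_mod_cast hk.1) (by exact_mod_cast hk.2)
  calc -(n ^ 2 * log 2) - n * log n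
      ≤ ∑ k ∈ Icc 1 n, (-((2 * k - 1) * log 2) - log k) := by
        rw [sum_sub_distrib, sum_neg_distrib, ← sum_mul, sum_Icc_two_mul_sub_one]
        linarith
    _ ≤ log (momentSpaceVolume n) := by
        rw [log_momentSpaceVolume]
        gcongr with k hk
        exact le_log_Gamma_mul_Gamma_div_Gamma_two_mul_natCast (by simp only [mem_Icc] at hk; omega)

theorem one_sub_one_div_le_log_momentSpaceVolume_div {n : ℕ} (hn : n ≠ 0) :
    1 - 1 / (n : ℝ) ≤ log (momentSpaceVolume n) / (-(n : ℝ) ^ 2 * log 2) := by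
  have hn' : (0 : ℝ) < n := by positivity
  have hD : 0 < (n : ℝ) ^ 2 * log 2 := by positivity
  rw [neg_mul, div_neg, ← neg_div, le_div_iff₀ hD]
  have : (1 - 1 / (n : ℝ)) * (n ^ 2 * log 2) = n ^ 2 * log 2 - n * log 2 := by
    field_simp
  linarith [log_momentSpaceVolume_le n]

theorem log_momentSpaceVolume_div_le_one_add {n : ℕ} (hn : n ≠ 0) :
    log (momentSpaceVolume n) / (-(n : ℝ) ^ 2 * log 2) ≤ 1 + log n / n / log 2 := by
  have hn' : (0 : ℝ) < n := by positivity
  have hD : 0 < (n : ℝ) ^ 2 * log 2 := by positivity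
  rw [neg_mul, div_neg, ← neg_div, div_le_iff₀ hD]
  have : (1 + log n / n / log 2) * (n ^ 2 * log 2) = n ^ 2 * log 2 + n * log n := by
    field_simp
  linarith [le_log_momentSpaceVolume n]

/-- With `V_n = ∏_{k=1}^n B(k,k)` the volume of the scalar `n`-th moment space,
`log V_n / (-n² log 2) → 1` as `n → ∞`. -/
theorem log_volume_momentSpace_asymptotics :
    Tendsto (fun n : ℕ =>
        Real.log (∏ k ∈ Finset.Icc 1 n,
            Real.Gamma k * Real.Gamma k / Real.Gamma (2 * k)) /
          (-(n : ℝ) ^ 2 * Real.log 2))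
      atTop (nhds 1) := by
  have hlower : Tendsto (fun n : ℕ => 1 - 1 / (n : ℝ)) atTop (nhds 1) := by
    simpa using tendsto_one_div_atTop_nhds_zero_nat.const_sub (1 : ℝ)
  have hupper : Tendsto (fun n : ℕ => 1 + log n / n / log 2) atTop (nhds 1) := by
    simpa using ((isLittleO_log_id_atTop.tendsto_div_nhds_zero.comp
      tendsto_natCast_atTop_atTop).div_const (log 2)).const_add (1 : ℝ)
  refine tendsto_of_tendsto_of_tendsto_of_le_of_le' hlower hupper ?_ ?_ <;>
    filter_upwards [eventually_ne_atTop 0] with n hn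
  · exact one_sub_one_div_le_log_momentSpaceVolume_div hn
  · exact log_momentSpaceVolume_div_le_one_add hn
end

section
/- If μ is a matrix probability measure on [0,1] that is invariant under x ↦ 1 - x, then all odd-indexed canonical moments satisfy U_{2n-1} = (1/2) I_p whenever they are defined. -/
/-!
Reflecting a matrix measure on `[c, d]` by `x ↦ c + d - x` turns its `k`-th moment, by the
binomial expansion of `(c + d - x)^k`, into `(-1)^k S_k` plus a combination of lower moments.
A reflection-invariant `μ` keeps all its moments under the reflection, so for odd `k` reflecting
the measures with moments `S₁, …, S_{k-1}` maps the set of their `k`-th moments onto itself by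
`T ↦ 2 S_k - T`. This map reverses the Loewner order and so exchanges the extremes:
`S⁻ + S⁺ = 2 S_k`, i.e. `S_k - S⁻ = (S⁺ - S⁻) / 2`, which is `U_k = I / 2`.
-/

open MeasureTheory Matrix

/-- A (normalized, nonnegative definite, symmetric) `p×p` matrix measure
supported on the interval `[c,d]`, represented by a finite nonnegative base
measure together with a symmetric positive semidefinite matrix density. -/
structure MatMeas (p : ℕ) (c d : ℝ) where
  base : Measure ℝ
  dens : ℝ → Matrix (Fin p) (Fin p) ℝ
  finite : IsFiniteMeasure base
  supp : base (Set.Icc c d)ᶜ = 0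
  symm : ∀ x, (dens x).IsSymm
  psd : ∀ x, (dens x).PosSemidef
  integrable : ∀ i j, Integrable (fun x => dens x i j) base
  normalized : ∀ i j, (∫ x, dens x i j ∂base) = (1 : Matrix (Fin p) (Fin p) ℝ) i j

/-- The `k`-th (matrix) moment `S_k = ∫ x^k dμ(x)` of a matrix measure. -/
noncomputable def mmoment {p : ℕ} {c d : ℝ} (μ : MatMeas p c d) (k : ℕ) :
    Matrix (Fin p) (Fin p) ℝ :=
  Matrix.of fun i j => ∫ x, x ^ k * μ.dens x i j ∂μ.base

/-- The matrix `μ(A)` assigned to a Borel set by a matrix measure. -/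
noncomputable def mmOf {p : ℕ} {c d : ℝ} (μ : MatMeas p c d) (A : Set ℝ) :
    Matrix (Fin p) (Fin p) ℝ :=
  Matrix.of fun i j => ∫ x in A, μ.dens x i j ∂μ.base

/-- The set of possible `k`-th moments of matrix measures on `[c,d]` whose
moments of order `1,…,k-1` are prescribed by `S`. -/
def kthMomentSet (p : ℕ) (c d : ℝ) (k : ℕ) (S : ℕ → Matrix (Fin p) (Fin p) ℝ) :
    Set (Matrix (Fin p) (Fin p) ℝ) :=
  { T | ∃ ν : MatMeas p c d, (∀ j, 1 ≤ j → j < k → mmoment ν j = S j) ∧ mmoment ν k = T }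

open scoped MatrixOrder

section

variable {α : Type*} [MeasurableSpace α] {μ : Measure α} {f : α → ℝ}

theorem setIntegral_eq_toReal_withDensity_sub (hf : Integrable f μ) {s : Set α}
    (hs : MeasurableSet s) :
    ∫ x in s, f x ∂μ = (μ.withDensity (fun x => ENNReal.ofReal (f x)) s).toReal
      - (μ.withDensity (fun x => ENNReal.ofReal (-f x)) s).toReal := by
  rw [withDensity_apply _ hs, withDensity_apply _ hs]
  exact integral_eq_lintegral_pos_part_sub_lintegral_neg_part hf.integrableOn

theorem integral_withDensity_ofReal (hf : Integrable f μ) (g : α → ℝ) :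
    ∫ x, g x ∂μ.withDensity (fun x => ENNReal.ofReal (f x)) =
      ∫ x, g x * max (f x) 0 ∂μ := by
  rw [integral_withDensity_eq_integral_toReal_smul₀ hf.aemeasurable.ennreal_ofReal
    (ae_of_all _ fun _ => ENNReal.ofReal_lt_top)]
  simp only [ENNReal.toReal_ofReal', smul_eq_mul, mul_comm]

theorem integral_mul_eq_sub_posPart_negPart (hf : Integrable f μ) {g : α → ℝ}
    (hg : Measurable g) {C : ℝ} (hgC : ∀ᵐ x ∂μ, ‖g x‖ ≤ C) :
    ∫ x, g x * f x ∂μ = ∫ x, g x * max (f x) 0 ∂μ - ∫ x, g x * max (-f x) 0 ∂μ := by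
  rw [← integral_sub (hf.pos_part.bdd_mul hg.aestronglyMeasurable hgC)
    (hf.neg_part.bdd_mul hg.aestronglyMeasurable hgC)]
  simp only [← mul_sub, max_zero_sub_max_neg_zero_eq_self]

/-- The positive and negative parts of the signed measure `f μ` need not be `r`-invariant;
invariance of `f μ` is this identity between them. -/
theorem map_withDensity_pos_add_withDensity_neg {r : α → α} (hr : Measurable r)
    (hf : Integrable f μ)
    (h : ∀ s, MeasurableSet s → ∫ x in r ⁻¹' s, f x ∂μ = ∫ x in s, f x ∂μ) :
    (μ.withDensity fun x => ENNReal.ofReal (f x)).map r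
        + μ.withDensity (fun x => ENNReal.ofReal (-f x)) =
      μ.withDensity (fun x => ENNReal.ofReal (f x))
        + (μ.withDensity fun x => ENNReal.ofReal (-f x)).map r := by
  have : IsFiniteMeasure (μ.withDensity fun x => ENNReal.ofReal (f x)) :=
    isFiniteMeasure_withDensity_ofReal hf.2
  have : IsFiniteMeasure (μ.withDensity fun x => ENNReal.ofReal (-f x)) :=
    isFiniteMeasure_withDensity_ofReal hf.neg.2
  ext s hs
  simp only [Measure.add_apply, Measure.map_apply hr hs]
  rw [← ENNReal.toReal_eq_toReal_iff' (by finiteness) (by finiteness),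
    ENNReal.toReal_add (by finiteness) (by finiteness),
    ENNReal.toReal_add (by finiteness) (by finiteness)]
  have hs' := h s hs
  rw [setIntegral_eq_toReal_withDensity_sub hf (hr hs),
    setIntegral_eq_toReal_withDensity_sub hf hs] at hs'
  linarith

theorem integrable_of_absolutelyContinuous_of_ae_bound {ν : Measure α} [IsFiniteMeasure ν]
    (hν : ν ≪ μ) {g : α → ℝ} (hg : Measurable g) {C : ℝ}
    (hgC : ∀ᵐ x ∂μ, ‖g x‖ ≤ C) :
    Integrable g ν :=
  .of_bound hg.aestronglyMeasurable C (hν.ae_le hgC)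

theorem integral_comp_mul_eq_of_setIntegral_preimage_eq {r : α → α} (hr : Measurable r)
    (hf : Integrable f μ)
    (h : ∀ s, MeasurableSet s → ∫ x in r ⁻¹' s, f x ∂μ = ∫ x in s, f x ∂μ)
    {g : α → ℝ} (hg : Measurable g) {C : ℝ} (hgC : ∀ᵐ x ∂μ, ‖g x‖ ≤ C)
    (hgrC : ∀ᵐ x ∂μ, ‖g (r x)‖ ≤ C) :
    ∫ x, g (r x) * f x ∂μ = ∫ x, g x * f x ∂μ := by
  set P := μ.withDensity (fun x => ENNReal.ofReal (f x))
  set N := μ.withDensity (fun x => ENNReal.ofReal (-f x))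
  have hfneg : Integrable (fun x => -f x) μ := hf.neg
  have : IsFiniteMeasure P := isFiniteMeasure_withDensity_ofReal hf.2
  have : IsFiniteMeasure N := isFiniteMeasure_withDensity_ofReal hfneg.2
  have hPμ : P ≪ μ := withDensity_absolutelyContinuous _ _
  have hNμ : N ≪ μ := withDensity_absolutelyContinuous _ _
  have hmap : ∀ ν : Measure α, ν ≪ μ → ∀ [IsFiniteMeasure ν],
      Integrable g (ν.map r) :=
    fun _ hν _ => (integrable_map_measure hg.aestronglyMeasurable hr.aemeasurable).2
      (integrable_of_absolutelyContinuous_of_ae_bound hν (hg.comp hr) hgrC)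
  have hintegral : ∫ x, g x ∂(P.map r + N) = ∫ x, g x ∂(P + N.map r) := by
    rw [map_withDensity_pos_add_withDensity_neg hr hf h]
  rw [integral_add_measure (hmap P hPμ)
      (integrable_of_absolutelyContinuous_of_ae_bound hNμ hg hgC),
    integral_add_measure (integrable_of_absolutelyContinuous_of_ae_bound hPμ hg hgC)
      (hmap N hNμ),
    integral_map hr.aemeasurable hg.aestronglyMeasurable,
    integral_map hr.aemeasurable hg.aestronglyMeasurable,
    integral_withDensity_ofReal hf, integral_withDensity_ofReal hf,
    integral_withDensity_ofReal hfneg, integral_withDensity_ofReal hfneg] at hintegral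
  rw [integral_mul_eq_sub_posPart_negPart hf hg hgC,
    integral_mul_eq_sub_posPart_negPart (g := fun x => g (r x)) hf (hg.comp hr) hgrC]
  linarith

end

theorem norm_pow_le_of_mem_Icc {c d x : ℝ} (hx : x ∈ Set.Icc c d) (k : ℕ) :
    ‖x ^ k‖ ≤ max |c| |d| ^ k := by
  rw [norm_pow, Real.norm_eq_abs]
  exact pow_le_pow_left₀ (abs_nonneg x) (abs_le_max_abs_abs hx.1 hx.2) k

theorem add_eq_of_isLeast_of_isGreatest {α : Type*} [AddCommGroup α] [PartialOrder α]
    [IsOrderedAddMonoid α] {K : Set α} {b m M : α} (hK : ∀ x ∈ K, b - x ∈ K)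
    (hm : IsLeast K m) (hM : IsGreatest K M) : m + M = b :=
  le_antisymm (le_sub_iff_add_le.1 (hm.2 (hK M hM.1)))
    (sub_le_iff_le_add'.1 (hM.2 (hK m hm.1)))

namespace MatMeas

variable {p : ℕ} {c d : ℝ}

theorem ae_mem_Icc (ν : MatMeas p c d) : ∀ᵐ x ∂ν.base, x ∈ Set.Icc c d :=
  ae_iff.2 ν.supp

theorem integrable_pow_mul_dens (ν : MatMeas p c d) (k : ℕ) (i j : Fin p) :
    Integrable (fun x => x ^ k * ν.dens x i j) ν.base :=
  (ν.integrable i j).bdd_mul (measurable_id.pow_const k).aestronglyMeasurable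
    (ν.ae_mem_Icc.mono fun _ hx => norm_pow_le_of_mem_Icc hx k)

theorem mmoment_zero (ν : MatMeas p c d) : mmoment ν 0 = 1 := by
  ext i j
  simpa [mmoment] using ν.normalized i j

noncomputable def reflect (ν : MatMeas p c d) : MatMeas p c d where
  base := ν.base.map (c + d - ·)
  dens x := ν.dens (c + d - x)
  finite := by
    have := ν.finite
    infer_instance
  supp := by
    rw [(measurableEmbedding_subLeft (c + d)).map_apply, Set.preimage_compl]
    convert ν.supp using 3
    exact (Set.preimage_const_sub_Icc _ _ _).trans (by simp)
  symm _ := ν.symm _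
  psd _ := ν.psd _
  integrable i j := by
    rw [(measurableEmbedding_subLeft (c + d)).integrable_map_iff]
    simpa [Function.comp_def] using ν.integrable i j
  normalized i j := by
    rw [(measurableEmbedding_subLeft (c + d)).integral_map]
    simpa using ν.normalized i j

theorem mmoment_reflect_apply (ν : MatMeas p c d) (k : ℕ) (i j : Fin p) :
    mmoment ν.reflect k i j = ∫ x, (c + d - x) ^ k * ν.dens x i j ∂ν.base := by
  simp [mmoment, reflect, (measurableEmbedding_subLeft (c + d)).integral_map]

theorem mmoment_reflect (ν : MatMeas p c d) (k : ℕ) :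
    mmoment ν.reflect k = ∑ m ∈ Finset.range (k + 1),
      ((-1) ^ m * (c + d) ^ (k - m) * k.choose m : ℝ) • mmoment ν m := by
  ext i j
  have hexpand : ∀ x, (c + d - x) ^ k * ν.dens x i j = ∑ m ∈ Finset.range (k + 1),
      ((-1) ^ m * (c + d) ^ (k - m) * k.choose m : ℝ) * (x ^ m * ν.dens x i j) := by
    intro x
    rw [sub_eq_neg_add, add_pow, Finset.sum_mul]
    refine Finset.sum_congr rfl fun m _ => ?_
    rw [neg_pow]
    ring
  rw [mmoment_reflect_apply, Matrix.sum_apply]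
  simp_rw [hexpand]
  rw [integral_finsetSum _ fun m _ => (ν.integrable_pow_mul_dens m i j).const_mul _]
  simp [mmoment, integral_const_mul]

theorem mmoment_reflect_sub_mmoment_reflect (ν ν' : MatMeas p c d) {k : ℕ}
    (h : ∀ m < k, mmoment ν m = mmoment ν' m) :
    mmoment ν.reflect k - mmoment ν'.reflect k =
      (-1 : ℝ) ^ k • (mmoment ν k - mmoment ν' k) := by
  rw [mmoment_reflect, mmoment_reflect, Finset.sum_range_succ, Finset.sum_range_succ,
    Finset.sum_congr rfl fun m hm => by rw [h m (Finset.mem_range.1 hm)]]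
  simp [smul_sub]

theorem mmoment_reflect_eq_of_forall_le (ν ν' : MatMeas p c d) {k : ℕ}
    (h : ∀ m ≤ k, mmoment ν m = mmoment ν' m) :
    mmoment ν.reflect k = mmoment ν'.reflect k := by
  rw [← sub_eq_zero, mmoment_reflect_sub_mmoment_reflect ν ν' fun m hm => h m hm.le,
    h k le_rfl, sub_self, smul_zero]

theorem mmoment_reflect_eq_of_invariant (μ : MatMeas p c d)
    (hsymm : ∀ A : Set ℝ, MeasurableSet A →
      mmOf μ ((fun x : ℝ => c + d - x) ⁻¹' A) = mmOf μ A) (k : ℕ) :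
    mmoment μ.reflect k = mmoment μ k := by
  ext i j
  rw [mmoment_reflect_apply]
  exact integral_comp_mul_eq_of_setIntegral_preimage_eq (measurable_const.sub measurable_id)
    (μ.integrable i j) (fun s hs => congrFun (congrFun (hsymm s hs) i) j)
    (measurable_id.pow_const k) (μ.ae_mem_Icc.mono fun _ hx => norm_pow_le_of_mem_Icc hx k)
    (μ.ae_mem_Icc.mono fun x hx => norm_pow_le_of_mem_Icc (x := c + d - x)
      ⟨by linarith [hx.2], by linarith [hx.1]⟩ k)

theorem two_nsmul_sub_mem_kthMomentSet (μ : MatMeas p c d)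
    (hsymm : ∀ A : Set ℝ, MeasurableSet A →
      mmOf μ ((fun x : ℝ => c + d - x) ⁻¹' A) = mmOf μ A) {k : ℕ} (hk : Odd k)
    {T : Matrix (Fin p) (Fin p) ℝ} (hT : T ∈ kthMomentSet p c d k (fun j => mmoment μ j)) :
    2 • mmoment μ k - T ∈ kthMomentSet p c d k (fun j => mmoment μ j) := by
  obtain ⟨ν, hlow, rfl⟩ := hT
  have hagree : ∀ m < k, mmoment ν m = mmoment μ m := by
    -- `kthMomentSet` prescribes the moments from order 1 on; order 0 is the normalization
    intro m hm
    rcases m.eq_zero_or_pos with rfl | hm0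
    · rw [mmoment_zero, mmoment_zero]
    · exact hlow m hm0 hm
  refine ⟨ν.reflect, fun j _ hj => ?_, ?_⟩
  · rw [mmoment_reflect_eq_of_forall_le ν μ fun m hm => hagree m (hm.trans_lt hj),
      mmoment_reflect_eq_of_invariant μ hsymm]
  · have hsub := mmoment_reflect_sub_mmoment_reflect ν μ hagree
    rw [mmoment_reflect_eq_of_invariant μ hsymm, hk.neg_one_pow, neg_one_smul,
      sub_eq_iff_eq_add] at hsub
    rw [hsub]
    abel

end MatMeas

theorem odd_canonical_moment_of_symmetric_general (p n : ℕ) (hn : 1 ≤ n)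
    (μ : MatMeas p 0 1)
    (hsymm : ∀ A : Set ℝ, MeasurableSet A →
      mmOf μ ((fun x : ℝ => 1 - x) ⁻¹' A) = mmOf μ A)
    (Smin Smax : Matrix (Fin p) (Fin p) ℝ)
    (hminMem : Smin ∈ kthMomentSet p 0 1 (2 * n - 1) (fun j => mmoment μ j))
    (hminLe : ∀ T ∈ kthMomentSet p 0 1 (2 * n - 1) (fun j => mmoment μ j),
      (T - Smin).PosSemidef)
    (hmaxMem : Smax ∈ kthMomentSet p 0 1 (2 * n - 1) (fun j => mmoment μ j))
    (hmaxGe : ∀ T ∈ kthMomentSet p 0 1 (2 * n - 1) (fun j => mmoment μ j),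
      (Smax - T).PosSemidef)
    (R : Matrix (Fin p) (Fin p) ℝ) (hRpd : R.PosDef)
    (hRR : R * R = Smax - Smin) :
    R⁻¹ * (mmoment μ (2 * n - 1) - Smin) * R⁻¹ =
      (1 / 2 : ℝ) • (1 : Matrix (Fin p) (Fin p) ℝ) := by
  have hodd : Odd (2 * n - 1) := ⟨n - 1, by omega⟩
  have hsymm' : ∀ A : Set ℝ, MeasurableSet A →
      mmOf μ ((fun x : ℝ => 0 + 1 - x) ⁻¹' A) = mmOf μ A := by
    simpa only [zero_add] using hsymm
  have hsum : Smin + Smax = 2 • mmoment μ (2 * n - 1) :=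
    add_eq_of_isLeast_of_isGreatest
      (fun T hT => μ.two_nsmul_sub_mem_kthMomentSet hsymm' hodd hT)
      ⟨hminMem, fun T hT => Matrix.le_iff.2 (hminLe T hT)⟩
      ⟨hmaxMem, fun T hT => Matrix.le_iff.2 (hmaxGe T hT)⟩
  have hhalf : mmoment μ (2 * n - 1) - Smin = (1 / 2 : ℝ) • (R * R) := by
    rw [hRR]
    linear_combination (norm := module) (-(1 / 2 : ℝ)) • hsum
  have hR : IsUnit R.det := (Matrix.isUnit_iff_isUnit_det R).1 hRpd.isUnit
  rw [hhalf, Matrix.mul_smul, Matrix.smul_mul, Matrix.nonsing_inv_mul_cancel_left _ _ hR,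
    Matrix.mul_nonsing_inv _ hR]

/-- If a matrix probability measure `μ` on `[0,1]` is invariant under
`x ↦ 1 - x`, then the odd canonical moments satisfy `U_{2n-1} = (1/2) I_p`
whenever they are defined.  Here `Smin`/`Smax` are the minimal/maximal possible
`(2n-1)`-st moments (w.r.t. the Loewner order) given the previous moments of
`μ`, `U` is defined whenever `Smax - Smin` is positive definite, and `R` is the
symmetric positive definite square root of `Smax - Smin`, so that the
conclusion states `(S⁺-S⁻)^{-1/2} (S_{2n-1} - S⁻) (S⁺-S⁻)^{-1/2} = (1/2) I_p`. -/
theorem odd_canonical_moment_of_symmetric (p n : ℕ) (hp : 0 < p) (hn : 1 ≤ n)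
    (μ : MatMeas p 0 1)
    (hsymm : ∀ A : Set ℝ, MeasurableSet A →
      mmOf μ ((fun x : ℝ => 1 - x) ⁻¹' A) = mmOf μ A)
    (Smin Smax : Matrix (Fin p) (Fin p) ℝ)
    (hminMem : Smin ∈ kthMomentSet p 0 1 (2 * n - 1) (fun j => mmoment μ j))
    (hminLe : ∀ T ∈ kthMomentSet p 0 1 (2 * n - 1) (fun j => mmoment μ j),
      (T - Smin).PosSemidef)
    (hmaxMem : Smax ∈ kthMomentSet p 0 1 (2 * n - 1) (fun j => mmoment μ j))
    (hmaxGe : ∀ T ∈ kthMomentSet p 0 1 (2 * n - 1) (fun j => mmoment μ j),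
      (Smax - T).PosSemidef)
    (hD : (Smax - Smin).PosDef)
    (R : Matrix (Fin p) (Fin p) ℝ) (hRsymm : R.IsSymm) (hRpd : R.PosDef)
    (hRR : R * R = Smax - Smin) :
    R⁻¹ * (mmoment μ (2 * n - 1) - Smin) * R⁻¹ =
      (1 / 2 : ℝ) • (1 : Matrix (Fin p) (Fin p) ℝ) :=
  odd_canonical_moment_of_symmetric_general p n hn μ hsymm Smin Smax hminMem hminLe hmaxMem hmaxGe R
    hRpd hRR
end

section
/- Define ζ₀ = 0, ζ₁ = u₁, and ζ_j = (1-u_{j-1}) u_j for scalars u_j ∈ (0,1). Define the array G_{i,j} by G_{i,j} = 0 for i > j, G_{0,j} = 1, and G_{i,j} = G_{i,j-1} + ζ_{j-i+1} G_{i-1,j} for 1 ≤ i ≤ j. Then G_{n,n} = Σ over all tuples (i₁,…,i_n) with i₁ = 1, i_k ∈ {1,…,n}, and i_k ≤ i_{k-1}+1, of the product ζ_{i_n} ⋯ ζ_{i_1}. -/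
/-!
Read along the diagonal `j - i = d`, `G_{M, M+d}` is the total weight `W_M(d+1)` of the paths of
length `M` with entries `≥ 1`, first entry `≤ d + 1` and steps up by at most one. Splitting off
the first entry `x` gives `W_{M+1}(c) = ∑_{x=1}^{c} ζ_x W_M(x+1)`, hence
`W_{M+1}(d+2) = W_{M+1}(d+1) + ζ_{d+2} W_M(d+3)`, which is the recursion of `G` at
`(M+1, M+d+2)`; the theorem is the case `M = n`, `d = 0`.
-/

open scoped Classical

open Finset

namespace LatticePath

def IsLatticePath : {M : ℕ} → ℕ → (Fin M → ℕ) → Prop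
  | 0, _, _ => True
  | _ + 1, c, i => 1 ≤ i 0 ∧ i 0 ≤ c ∧ IsLatticePath (i 0 + 1) (Fin.tail i)

def weight (ζ : ℕ → ℝ) : ℕ → ℕ → ℝ
  | 0, _ => 1
  | M + 1, c => ∑ x ∈ Icc 1 c, ζ x * weight ζ M (x + 1)

lemma isLatticePath_succ_iff {M c : ℕ} {i : Fin (M + 1) → ℕ} :
    IsLatticePath c i ↔
      (1 ≤ i 0 ∧ i 0 ≤ c) ∧ (∀ k, 1 ≤ i k) ∧ ∀ k : Fin M, i k.succ ≤ i k.castSucc + 1 := by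
  induction M generalizing c with
  | zero => simp +contextual [IsLatticePath, Fin.forall_fin_one]
  | succ M ih =>
    simp only [IsLatticePath] at ih ⊢
    rw [ih]
    simp only [Fin.forall_fin_succ, Fin.tail, Fin.succ_castSucc, Fin.succ_zero_eq_one]
    tauto

lemma sum_isLatticePath_eq_weight (ζ : ℕ → ℝ) {N : ℕ} :
    ∀ M c, c + M ≤ N + 1 →
      ∑ i : Fin M → Fin (N + 1),
        (if IsLatticePath c (Fin.val ∘ i) then ∏ k, ζ (i k) else 0) = weight ζ M c
  | 0, c, _ => by simp [IsLatticePath, weight]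
  | M + 1, c, hcM => by
    calc ∑ i : Fin (M + 1) → Fin (N + 1),
          (if IsLatticePath c (Fin.val ∘ i) then ∏ k, ζ (i k) else 0)
        = ∑ x : Fin (N + 1), if 1 ≤ (x : ℕ) ∧ (x : ℕ) ≤ c then
            ζ x * ∑ p : Fin M → Fin (N + 1),
              (if IsLatticePath (x + 1) (Fin.val ∘ p) then ∏ k, ζ (p k) else 0) else 0 := by
          rw [← (Fin.consEquiv fun _ => Fin (N + 1)).sum_comp, Fintype.sum_prod_type]
          refine sum_congr rfl fun x _ => ?_
          simp only [Fin.consEquiv, Equiv.coe_fn_mk, IsLatticePath, Fin.comp_cons, Fin.cons_zero,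
            Fin.tail_cons, Fin.prod_univ_succ, Fin.cons_succ, mul_sum]
          split_ifs with hx
          · simp only [hx, true_and, mul_ite, mul_zero]
          · exact sum_eq_zero fun p _ => if_neg fun h => hx ⟨h.1, h.2.1⟩
      _ = ∑ x ∈ range (N + 1), if 1 ≤ x ∧ x ≤ c then ζ x * weight ζ M (x + 1) else 0 := by
          rw [← Fin.sum_univ_eq_sum_range]
          refine sum_congr rfl fun x _ => ?_
          split_ifs with hx
          · rw [sum_isLatticePath_eq_weight ζ M (x + 1) (by omega)]
          · rfl
      _ = weight ζ (M + 1) c := by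
          rw [← sum_filter, weight]
          congr 1
          ext x
          simp only [mem_filter, mem_range, mem_Icc]
          omega

lemma G_eq_weight (ζ : ℕ → ℝ) (G : ℕ → ℕ → ℝ)
    (hG0 : ∀ j, G 0 j = 1)
    (hGz : ∀ i j, j < i → G i j = 0)
    (hGrec : ∀ i j, 1 ≤ i → i ≤ j → G i j = G i (j - 1) + ζ (j - i + 1) * G (i - 1) j) :
    ∀ M d, G M (M + d) = weight ζ M (d + 1)
  | 0, d => by simp [hG0, weight]
  | M + 1, 0 => by
    rw [hGrec _ _ le_add_self le_rfl, hGz _ _ (by omega), weight, Icc_self, sum_singleton,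
      ← G_eq_weight ζ G hG0 hGz hGrec M 1]
    simp
  | M + 1, d + 1 => by
    rw [hGrec _ _ le_add_self (by omega), weight, sum_Icc_succ_top (by omega), ← weight,
      ← G_eq_weight ζ G hG0 hGz hGrec (M + 1) d, ← G_eq_weight ζ G hG0 hGz hGrec M (d + 2)]
    congr 3 <;> omega

end LatticePath

open LatticePath in
theorem G_diag_eq_sum_over_paths_general (n : ℕ) (hn : 1 ≤ n)
    (ζ : ℕ → ℝ)
    (G : ℕ → ℕ → ℝ)
    (hG0 : ∀ j, G 0 j = 1)
    (hGz : ∀ i j, j < i → G i j = 0)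
    (hGrec : ∀ i j, 1 ≤ i → i ≤ j → G i j = G i (j - 1) + ζ (j - i + 1) * G (i - 1) j) :
    G n n = ∑ i : Fin n → Fin (n + 1),
      if ((i ⟨0, hn⟩ : ℕ) = 1 ∧ (∀ k, 1 ≤ (i k : ℕ)) ∧
          ∀ k : ℕ, ∀ h : k + 1 < n,
            (i ⟨k + 1, h⟩ : ℕ) ≤ (i ⟨k, Nat.lt_of_succ_lt h⟩ : ℕ) + 1)
      then ∏ k : Fin n, ζ (i k) else 0 := by
  obtain ⟨m, rfl⟩ : ∃ m, n = m + 1 := ⟨n - 1, by omega⟩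
  calc G (m + 1) (m + 1) = weight ζ (m + 1) 1 := G_eq_weight ζ G hG0 hGz hGrec (m + 1) 0
    _ = ∑ i : Fin (m + 1) → Fin (m + 1 + 1),
          if IsLatticePath 1 (Fin.val ∘ i) then ∏ k, ζ (i k) else 0 :=
      (sum_isLatticePath_eq_weight ζ (N := m + 1) (m + 1) 1 (by omega)).symm
    _ = _ := by
      refine sum_congr rfl fun i _ => if_congr ?_ rfl rfl
      rw [isLatticePath_succ_iff, show (0 : Fin (m + 1)) = ⟨0, hn⟩ from rfl]
      simp only [Function.comp_apply]
      exact ⟨fun ⟨⟨h1, h2⟩, hpos, hstep⟩ => ⟨by omega, hpos, fun k hk => hstep ⟨k, by omega⟩⟩,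
        fun ⟨h1, hpos, hstep⟩ => ⟨⟨by omega, by omega⟩, hpos, fun k => hstep k (by omega)⟩⟩

/-- With `ζ₀ = 0`, `ζ₁ = u₁`, `ζ_j = (1-u_{j-1})u_j` and the array `G` defined by
`G_{i,j} = 0` for `i > j`, `G_{0,j} = 1` and
`G_{i,j} = G_{i,j-1} + ζ_{j-i+1} G_{i-1,j}` for `1 ≤ i ≤ j`, one has
`G_{n,n} = Σ_{(i₁,…,i_n)} ζ_{i_n} ⋯ ζ_{i_1}`, the sum running over all tuples
with `i₁ = 1`, `i_k ∈ {1,…,n}` and `i_k ≤ i_{k-1} + 1`. -/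
theorem G_diag_eq_sum_over_paths (n : ℕ) (hn : 1 ≤ n)
    (u : ℕ → ℝ) (hu : ∀ j, u j ∈ Set.Ioo (0:ℝ) 1)
    (ζ : ℕ → ℝ) (hζ0 : ζ 0 = 0) (hζ1 : ζ 1 = u 1)
    (hζ : ∀ j, 2 ≤ j → ζ j = (1 - u (j - 1)) * u j)
    (G : ℕ → ℕ → ℝ)
    (hG0 : ∀ j, G 0 j = 1)
    (hGz : ∀ i j, j < i → G i j = 0)
    (hGrec : ∀ i j, 1 ≤ i → i ≤ j → G i j = G i (j - 1) + ζ (j - i + 1) * G (i - 1) j) :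
    G n n = ∑ i : Fin n → Fin (n + 1),
      if ((i ⟨0, hn⟩ : ℕ) = 1 ∧ (∀ k, 1 ≤ (i k : ℕ)) ∧
          ∀ k : ℕ, ∀ h : k + 1 < n,
            (i ⟨k + 1, h⟩ : ℕ) ≤ (i ⟨k, Nat.lt_of_succ_lt h⟩ : ℕ) + 1)
      then ∏ k : Fin n, ζ (i k) else 0 :=
  G_diag_eq_sum_over_paths_general n hn ζ G hG0 hGz hGrec
end

section
/- The Jacobian of the linear map X ↦ A X Aᵀ + B on the space of real symmetric p×p matrices, where A is a fixed nonsingular p×p matrix and B a fixed symmetric matrix, equals (det A)^{p+1} in absolute value; equivalently, the pushforward of Lebesgue measure on S_p(ℝ) under this map scales volumes by |det A|^{p+1}. -/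
open MeasureTheory Matrix

/-- The symmetric matrix built from its upper-triangular coordinates. -/
def symOfCoords (p : ℕ) (f : { q : Fin p × Fin p // q.1 ≤ q.2 } → ℝ) :
    Matrix (Fin p) (Fin p) ℝ :=
  Matrix.of fun i j => if h : i ≤ j then f ⟨(i, j), h⟩ else f ⟨(j, i), le_of_not_ge h⟩

/-- The map `X ↦ A X Aᵀ + B` on symmetric matrices, in the coordinates
`x_{ij}`, `i ≤ j`. -/
def conjAffineCoords (p : ℕ) (A B : Matrix (Fin p) (Fin p) ℝ)
    (f : { q : Fin p × Fin p // q.1 ≤ q.2 } → ℝ) :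
    { q : Fin p × Fin p // q.1 ≤ q.2 } → ℝ :=
  fun q => (A * symOfCoords p f * Aᵀ + B) q.1.1 q.1.2

/-!
In coordinates, `X ↦ A X Aᵀ` is a linear map `C_A` with `C_{AB} = C_A C_B`, so `A ↦ det C_A` is
multiplicative and, by Gaussian elimination, it suffices to compute it on diagonal matrices and
on transvections `1 + E` with `E² = 0`. For `A = diag d` the coordinate `x_{ij}` is scaled by
`d_i d_j`, and each index occurs `p + 1` times among the pairs `i ≤ j`, giving `(det A)^(p+1)`.
For `A = 1 + E`, `C_A - 1` corresponds to `X ↦ E X + X Eᵀ + E X Eᵀ`, whose cube vanishes, so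
`C_A` is unipotent of determinant `1`. The translation by `B` preserves Lebesgue measure, and a
linear map scales it by the absolute value of its determinant.
-/

open Finset in
theorem prod_mul_over_le_pairs {ι M : Type*} [Fintype ι] [LinearOrder ι] [CommMonoid M]
    (d : ι → M) :
    ∏ q : { q : ι × ι // q.1 ≤ q.2 }, d q.1.1 * d q.1.2 = (∏ i, d i) ^ (Fintype.card ι + 1) := by
  set s := univ.filter fun q : ι × ι => q.1 ≤ q.2
  set t := univ.filter fun q : ι × ι => q.2 ≤ q.1
  have hswap : ∏ q ∈ s, d q.2 = ∏ q ∈ t, d q.1 :=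
    prod_equiv (Equiv.prodComm ι ι) (by simp [s, t]) (by simp)
  have hunion : s ∪ t = univ := by ext q; simpa [s, t] using le_total q.1 q.2
  have hinter : s ∩ t = univ.diag := by ext q; simp [s, t, le_antisymm_iff]
  calc ∏ q : { q : ι × ι // q.1 ≤ q.2 }, d q.1.1 * d q.1.2
      = (∏ q ∈ s, d q.1) * ∏ q ∈ t, d q.1 := by
        rw [← hswap, ← prod_mul_distrib]
        exact (prod_subtype s (by simp [s]) fun q => d q.1 * d q.2).symm
    _ = (∏ q : ι × ι, d q.1) * ∏ q ∈ univ.diag, d q.1 := by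
        rw [← prod_union_inter, hunion, hinter]
    _ = (∏ i, d i) ^ (Fintype.card ι + 1) := by
        rw [prod_diag, Fintype.prod_prod_type]
        simp [pow_succ, prod_pow]

theorem Matrix.det_one_add_of_isNilpotent {n R : Type*} [Fintype n] [DecidableEq n] [CommRing R]
    [IsDomain R] {N : Matrix n n R} (hN : IsNilpotent N) : (1 + N).det = 1 := by
  have hchar : N.charpoly = Polynomial.X ^ Fintype.card n :=
    sub_eq_zero.mp (isNilpotent_charpoly_sub_pow_of_isNilpotent hN).eq_zero
  have heval := N.eval_charpoly (-1)
  rw [hchar, Polynomial.eval_pow, Polynomial.eval_X, map_neg, map_one, ← neg_add', det_neg]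
    at heval
  exact (isUnit_neg_one.pow _).mul_left_cancel (heval.symm.trans (mul_one _).symm)

theorem LinearMap.det_one_add_of_isNilpotent {R M : Type*} [CommRing R] [IsDomain R]
    [AddCommGroup M] [Module R M] [Module.Free R M] [Module.Finite R M] {u : Module.End R M}
    (hu : IsNilpotent u) : LinearMap.det (1 + u) = 1 := by
  let b := Module.Free.chooseBasis R M
  rw [← LinearMap.det_toMatrix b, map_add, LinearMap.toMatrix_one]
  exact Matrix.det_one_add_of_isNilpotent (hu.map (LinearMap.toMatrixAlgEquiv b))

theorem Matrix.IsSymm.mul_mul_transpose {n R : Type*} [Fintype n] [CommSemiring R]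
    {X : Matrix n n R} (hX : X.IsSymm) (A : Matrix n n R) : (A * X * Aᵀ).IsSymm := by
  simp [IsSymm, transpose_mul, hX.eq, Matrix.mul_assoc]

abbrev UpperIndex (p : ℕ) := { q : Fin p × Fin p // q.1 ≤ q.2 }

section Coordinates

variable {p : ℕ}

def upperCoords (p : ℕ) : Matrix (Fin p) (Fin p) ℝ →ₗ[ℝ] UpperIndex p → ℝ where
  toFun X q := X q.1.1 q.1.2
  map_add' _ _ := rfl
  map_smul' _ _ := rfl

@[simp]
theorem upperCoords_apply (X : Matrix (Fin p) (Fin p) ℝ) (q : UpperIndex p) :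
    upperCoords p X q = X q.1.1 q.1.2 := rfl

def symOfCoordsₗ (p : ℕ) : (UpperIndex p → ℝ) →ₗ[ℝ] Matrix (Fin p) (Fin p) ℝ where
  toFun := symOfCoords p
  map_add' f g := by ext i j; by_cases h : i ≤ j <;> simp [symOfCoords, h]
  map_smul' c f := by ext i j; by_cases h : i ≤ j <;> simp [symOfCoords, h]

@[simp]
theorem symOfCoordsₗ_apply (f : UpperIndex p → ℝ) : symOfCoordsₗ p f = symOfCoords p f := rfl

@[simp]
theorem upperCoords_symOfCoords (f : UpperIndex p → ℝ) : upperCoords p (symOfCoords p f) = f := by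
  ext q
  simp [symOfCoords, q.2]

theorem symOfCoords_injective : Function.Injective (symOfCoords p) :=
  Function.LeftInverse.injective upperCoords_symOfCoords

theorem symOfCoords_upperCoords {X : Matrix (Fin p) (Fin p) ℝ} (hX : X.IsSymm) :
    symOfCoords p (upperCoords p X) = X := by
  ext i j
  by_cases h : i ≤ j
  · simp [symOfCoords, h]
  · simp [symOfCoords, h, hX.apply i j]

theorem symOfCoords_isSymm (f : UpperIndex p → ℝ) : (symOfCoords p f).IsSymm := by
  ext i j
  rcases lt_trichotomy i j with h | rfl | h
  · simp [symOfCoords, h.le, not_le.2 h]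
  · rfl
  · simp [symOfCoords, h.le, not_le.2 h]

def conjCoords (p : ℕ) (A : Matrix (Fin p) (Fin p) ℝ) : Module.End ℝ (UpperIndex p → ℝ) :=
  upperCoords p ∘ₗ (LinearMap.mulLeft ℝ A ∘ₗ LinearMap.mulRight ℝ Aᵀ) ∘ₗ symOfCoordsₗ p

theorem conjCoords_apply (A : Matrix (Fin p) (Fin p) ℝ) (f : UpperIndex p → ℝ) :
    conjCoords p A f = upperCoords p (A * symOfCoords p f * Aᵀ) := by
  simp [conjCoords, Matrix.mul_assoc]

theorem symOfCoords_conjCoords (A : Matrix (Fin p) (Fin p) ℝ) (f : UpperIndex p → ℝ) :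
    symOfCoords p (conjCoords p A f) = A * symOfCoords p f * Aᵀ := by
  rw [conjCoords_apply, symOfCoords_upperCoords]
  exact (symOfCoords_isSymm f).mul_mul_transpose A

theorem conjCoords_mul (A B : Matrix (Fin p) (Fin p) ℝ) :
    conjCoords p (A * B) = conjCoords p A * conjCoords p B := by
  refine LinearMap.ext fun f => ?_
  rw [Module.End.mul_apply, conjCoords_apply, conjCoords_apply A, symOfCoords_conjCoords,
    transpose_mul]
  simp only [Matrix.mul_assoc]

theorem conjAffineCoords_eq (A B : Matrix (Fin p) (Fin p) ℝ) :
    conjAffineCoords p A B = (· + upperCoords p B) ∘ conjCoords p A := by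
  ext f q
  simp [conjAffineCoords, conjCoords_apply]

theorem conjCoords_diagonal (d : Fin p → ℝ) :
    conjCoords p (diagonal d) = toLin' (diagonal fun q : UpperIndex p => d q.1.1 * d q.1.2) := by
  refine LinearMap.ext fun f => funext fun q => ?_
  simp [conjCoords_apply, symOfCoords, q.2, mulVec_diagonal]
  ring

theorem det_conjCoords_diagonal (d : Fin p → ℝ) :
    LinearMap.det (conjCoords p (diagonal d)) = (∏ i, d i) ^ (p + 1) := by
  rw [conjCoords_diagonal, LinearMap.det_toLin', det_diagonal, prod_mul_over_le_pairs,
    Fintype.card_fin]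

theorem det_conjCoords_one_add {E : Matrix (Fin p) (Fin p) ℝ} (hE : E * E = 0) :
    LinearMap.det (conjCoords p (1 + E)) = 1 := by
  set m : Matrix (Fin p) (Fin p) ℝ → Matrix (Fin p) (Fin p) ℝ :=
    fun X => E * X + X * Eᵀ + E * X * Eᵀ
  have hm : ∀ f, symOfCoords p ((conjCoords p (1 + E) - 1) f) = m (symOfCoords p f) := by
    intro f
    rw [LinearMap.sub_apply, ← symOfCoordsₗ_apply, map_sub, symOfCoordsₗ_apply,
      symOfCoordsₗ_apply, symOfCoords_conjCoords, Module.End.one_apply]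
    simp only [m, transpose_add, transpose_one]
    noncomm_ring
  have hET : Eᵀ * Eᵀ = 0 := by rw [← transpose_mul, hE, transpose_zero]
  have hm3 : ∀ X, m (m (m X)) = 0 := by
    intro X
    simp only [m, Matrix.mul_add, Matrix.add_mul, Matrix.mul_assoc]
    simp [← Matrix.mul_assoc E E, hE, hET]
  have hnil : (conjCoords p (1 + E) - 1) ^ 3 = 0 := by
    refine LinearMap.ext fun f => symOfCoords_injective ?_
    rw [pow_succ, pow_succ, pow_one, Module.End.mul_apply, Module.End.mul_apply, hm, hm, hm, hm3,
      LinearMap.zero_apply, ← symOfCoordsₗ_apply, map_zero]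
  simpa using LinearMap.det_one_add_of_isNilpotent ⟨3, hnil⟩

theorem det_conjCoords (A : Matrix (Fin p) (Fin p) ℝ) :
    LinearMap.det (conjCoords p A) = A.det ^ (p + 1) := by
  refine diagonal_transvection_induction
    (fun M => LinearMap.det (conjCoords p M) = M.det ^ (p + 1)) A
    (fun d _ => ?_) (fun t => ?_) (fun M N hM hN => ?_)
  · rw [det_conjCoords_diagonal, det_diagonal]
  · rw [TransvectionStruct.det, one_pow]
    exact det_conjCoords_one_add (single_mul_single_of_ne _ _ _ _ t.hij.symm _)
  · rw [conjCoords_mul, map_mul, hM, hN, det_mul, mul_pow]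

end Coordinates

theorem jacobian_conj_affine_symmetric_general (p : ℕ)
    (A B : Matrix (Fin p) (Fin p) ℝ) :
    ∀ s : Set ({ q : Fin p × Fin p // q.1 ≤ q.2 } → ℝ), MeasurableSet s →
      volume (conjAffineCoords p A B '' s) =
        ENNReal.ofReal (|A.det| ^ (p + 1)) * volume s := by
  intro s _
  rw [conjAffineCoords_eq, Set.image_comp, Set.image_add_right, measure_preimage_add_right,
    Measure.addHaar_image_linearMap, det_conjCoords, abs_pow]

/-- The Jacobian of `X ↦ A X Aᵀ + B` on the space of real symmetric `p×p`
matrices (with Lebesgue measure in the coordinates `x_{ij}`, `i ≤ j`) equals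
`|det A|^{p+1}`: the map scales volumes by `|det A|^{p+1}`. -/
theorem jacobian_conj_affine_symmetric (p : ℕ)
    (A B : Matrix (Fin p) (Fin p) ℝ) (hA : IsUnit A.det) (hB : B.IsSymm) :
    ∀ s : Set ({ q : Fin p × Fin p // q.1 ≤ q.2 } → ℝ), MeasurableSet s →
      volume (conjAffineCoords p A B '' s) =
        ENNReal.ofReal (|A.det| ^ (p + 1)) * volume s :=
  jacobian_conj_affine_symmetric_general p A B
end
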